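/- S-holomorphicity implies preholomorphicity at a black point: Let δ > 0 and F : ℂ → ℂ be s-holomorphic at the black point u ∈ ℂ. Then the vertical derivative Ḟ(u) of F at u exists and satisfies (1/δ)·(F(u + δ/2) − F(u − δ/2)) + i·Ḟ(u) = 0. -/

import Mathlib

noncomputable section

/-- Projection of `a` onto the line `e^{-iπ/4}·ℝ`. -/
def projUp (a : ℂ) : ℂ := (a - Complex.I * (starRingEnd ℂ) a) / 2

/-- Projection of `a` onto the line `e^{iπ/4}·ℝ`. -/
def projDn (a : ℂ) : ℂ := (a + Complex.I * (starRingEnd ℂ) a) / 2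

/-- `F^↑(z)`, the projection of `F z` onto `e^{-iπ/4}·ℝ`. -/
def Fup (F : ℂ → ℂ) (z : ℂ) : ℂ := projUp (F z)

/-- `F^↓(z)`, the projection of `F z` onto `e^{iπ/4}·ℝ`. -/
def Fdn (F : ℂ → ℂ) (z : ℂ) : ℂ := projDn (F z)

/-- Vertical derivative: `G` has derivative `d` at `z` in the vertical direction,
i.e. the map `t ↦ G (z + i t)` (for real `t`) has derivative `d` at `t = 0`. -/
def HasVDerivAt {E : Type*} [NormedAddCommGroup E] [NormedSpace ℝ E]
    (G : ℂ → E) (d : E) (z : ℂ) : Prop :=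
  HasDerivAt (fun t : ℝ => G (z + (t : ℂ) * Complex.I)) d 0

/-- Second vertical derivative: there is a function `G'` which is a vertical derivative of `G`
at all points `z + i t` for `t` near `0`, and `G'` has vertical derivative `d` at `z`. -/
def HasVDeriv2At {E : Type*} [NormedAddCommGroup E] [NormedSpace ℝ E]
    (G : ℂ → E) (d : E) (z : ℂ) : Prop :=
  ∃ G' : ℂ → E,
    (∀ᶠ t in nhds (0 : ℝ), HasVDerivAt G (G' (z + (t : ℂ) * Complex.I)) (z + (t : ℂ) * Complex.I))
    ∧ HasVDerivAt G' d z

/-- `F` is s-holomorphic at a white point `w`. -/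
def SHolWhite (δ : ℝ) (F : ℂ → ℂ) (w : ℂ) : Prop :=
  Fup F w = Fup F (w - (δ / 2 : ℝ)) ∧ Fdn F w = Fdn F (w + (δ / 2 : ℝ)) ∧
  HasVDerivAt (Fup F) (Complex.I / δ * (Fdn F (w + (δ / 2 : ℝ)) - Fdn F (w - (δ / 2 : ℝ)))) w ∧
  HasVDerivAt (Fdn F) (Complex.I / δ * (Fup F (w + (δ / 2 : ℝ)) - Fup F (w - (δ / 2 : ℝ)))) w

/-- `F` is s-holomorphic at a black point `u`. -/
def SHolBlack (δ : ℝ) (F : ℂ → ℂ) (u : ℂ) : Prop :=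
  Fup F u = Fup F (u + (δ / 2 : ℝ)) ∧ Fdn F u = Fdn F (u - (δ / 2 : ℝ)) ∧
  HasVDerivAt (Fup F) (Complex.I / δ * (Fdn F (u + (δ / 2 : ℝ)) - Fdn F (u - (δ / 2 : ℝ)))) u ∧
  HasVDerivAt (Fdn F) (Complex.I / δ * (Fup F (u + (δ / 2 : ℝ)) - Fup F (u - (δ / 2 : ℝ)))) u

/-- Black points `Ω^•` of the rectangular discrete domain `Ω_δ`:
points `δ k + i t` with `m ≤ k ≤ n` and `t ∈ [c, d]`. -/
def BlackPts (δ : ℝ) (m n : ℤ) (c d : ℝ) : Set ℂ :=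
  {z | (∃ k : ℤ, m ≤ k ∧ k ≤ n ∧ z.re = δ * k) ∧ c ≤ z.im ∧ z.im ≤ d}

/-- White points `Ω^∘` of the rectangular discrete domain `Ω_δ`:
points `δ (k + 1/2) + i t` with `m ≤ k ≤ n - 1` and `t ∈ [c, d]`. -/
def WhitePts (δ : ℝ) (m n : ℤ) (c d : ℝ) : Set ℂ :=
  {z | (∃ k : ℤ, m ≤ k ∧ k ≤ n - 1 ∧ z.re = δ * (k + 1 / 2)) ∧ c ≤ z.im ∧ z.im ≤ d}

/-- Interior black points: `m < k < n` and `c < t < d`. -/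
def IntBlackPts (δ : ℝ) (m n : ℤ) (c d : ℝ) : Set ℂ :=
  {z | (∃ k : ℤ, m < k ∧ k < n ∧ z.re = δ * k) ∧ c < z.im ∧ z.im < d}

/-- Interior white points: `m ≤ k ≤ n - 1` and `c < t < d`. -/
def IntWhitePts (δ : ℝ) (m n : ℤ) (c d : ℝ) : Set ℂ :=
  {z | (∃ k : ℤ, m ≤ k ∧ k ≤ n - 1 ∧ z.re = δ * (k + 1 / 2)) ∧ c < z.im ∧ z.im < d}

theorem projUp_add_projDn (a : ℂ) : projUp a + projDn a = a := by
  simp only [projUp, projDn]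
  ring

theorem Fup_add_Fdn (F : ℂ → ℂ) : Fup F + Fdn F = F :=
  funext fun z => projUp_add_projDn (F z)

theorem HasVDerivAt.add {E : Type*} [NormedAddCommGroup E] [NormedSpace ℝ E]
    {G H : ℂ → E} {dG dH : E} {z : ℂ} (hG : HasVDerivAt G dG z) (hH : HasVDerivAt H dH z) :
    HasVDerivAt (G + H) (dG + dH) z :=
  HasDerivAt.add hG hH

theorem SHolBlack.hasVDerivAt {δ : ℝ} {F : ℂ → ℂ} {u : ℂ} (hsh : SHolBlack δ F u) :
    HasVDerivAt F (Complex.I / δ * (F (u + (δ / 2 : ℝ)) - F (u - (δ / 2 : ℝ)))) u := by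
  obtain ⟨-, -, hup, hdn⟩ := hsh
  convert hup.add hdn using 1
  · exact (Fup_add_Fdn F).symm
  · conv_lhs => rw [← Fup_add_Fdn F]
    simp only [Pi.add_apply]
    ring

theorem shol_black_prehol_general
    (δ : ℝ) (u : ℂ) (F : ℂ → ℂ) (hsh : SHolBlack δ F u) :
    ∃ dF : ℂ, HasVDerivAt F dF u ∧
      1 / δ * (F (u + (δ / 2 : ℝ)) - F (u - (δ / 2 : ℝ))) + Complex.I * dF = 0 := by
  refine ⟨_, hsh.hasVDerivAt, ?_⟩
  linear_combination (1 / δ * (F (u + (δ / 2 : ℝ)) - F (u - (δ / 2 : ℝ)))) * Complex.I_sq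

/-- S-holomorphicity implies preholomorphicity at a black point. -/
theorem shol_black_prehol
    (δ : ℝ) (hδ : 0 < δ) (u : ℂ) (F : ℂ → ℂ) (hsh : SHolBlack δ F u) :
    ∃ dF : ℂ, HasVDerivAt F dF u ∧
      1 / δ * (F (u + (δ / 2 : ℝ)) - F (u - (δ / 2 : ℝ))) + Complex.I * dF = 0 :=
  shol_black_prehol_general δ u F hsh
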